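/- arXiv:2601.19800 — 9 statements merged into one kernel-verified Lean document; each statement's English description precedes it below -/
import Mathlib

section
/- If g is an indicator variogram on X, then there exist a probability space (Ω, P) and a family Y : X → Ω → ℝ of random variables such that: (i) for every pair x, y ∈ X there is a probability measure ν_{x,y} on [−1,1] for which the joint law of (Y x, Y y) equals the mixture ∫_{[−1,1]} μ_r dν_{x,y}(r), where μ_r denotes the law of (U, r·U + √(1−r²)·V) for U, V independent standard Gaussian N(0,1) random variables (so that, in particular, each Y x is standard Gaussian with median 0); and (ii) g(x,y) = (1/2)·E[(1_{Y x ≥ 0} − 1_{Y y ≥ 0})²] for all x, y ∈ X. That is, every indicator variogram is the median indicator variogram of a Hermitian random field. -/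
open MeasureTheory Real ProbabilityTheory

/-- `g : X × X → ℝ` is an indicator variogram on `X`. -/
def IsIndicatorVariogram (X : Type*) (g : X × X → ℝ) : Prop :=
  ∃ (Ω : Type) (_ : MeasurableSpace Ω) (P : Measure Ω),
    IsProbabilityMeasure P ∧
    ∃ Z : X → Ω → ℝ,
      (∀ x, Measurable (Z x)) ∧
      (∀ x ω, Z x ω = 0 ∨ Z x ω = 1) ∧
      (∃ c : ℝ, ∀ x, ∫ ω, Z x ω ∂P = c) ∧
      (∀ x y, g (x, y) = (1 / 2) * ∫ ω, (Z x ω - Z y ω) ^ 2 ∂P)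

/-- The centered bivariate Gaussian law with standard `N(0,1)` marginals and correlation `r`:
the law of `(U, r·U + √(1−r²)·V)` with `U, V` independent standard Gaussians. -/
noncomputable def bivariateGaussian (r : ℝ) : Measure (ℝ × ℝ) :=
  Measure.map (fun uv : ℝ × ℝ => (uv.1, r * uv.1 + Real.sqrt (1 - r ^ 2) * uv.2))
    ((gaussianReal 0 1).prod (gaussianReal 0 1))

/-!
Let `Z` be the 0/1 field and `U` a standard Gaussian independent of it, and put
`Y x := (2 Z x - 1) U`. Given `ω`, the pair `(Y x, Y y)` is `(a U, b U)` with signs `a, b = ±1`,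
whose law is the degenerate bivariate Gaussian of correlation `a b`; mixing over `ω` makes every
bivariate law of `Y` a mixture of `bivariateGaussian r`, `r = ±1`. Since `U ≠ 0` almost surely,
`1{Y x ≥ 0}` equals `Z x` or `1 - Z x` according to the sign of `U`, so the median indicators of
`Y` have the same squared increments as `Z`.
-/

namespace MeasureTheory.Measure

variable {α β γ : Type*} [MeasurableSpace α] [MeasurableSpace β] [MeasurableSpace γ]

lemma bind_map_eq_bind_comp (μ : Measure α) {f : α → β} (hf : Measurable f)
    {κ : β → Measure γ} (hκ : Measurable κ) : (μ.map f).bind κ = μ.bind (κ ∘ f) := by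
  rw [bind, bind, map_map hκ hf]

lemma map_prod_eq_bind (μ : Measure α) (ν : Measure β) [SFinite ν] {f : α × β → γ}
    (hf : Measurable f) : (μ.prod ν).map f = μ.bind fun a => ν.map fun b => f (a, b) := by
  rw [prod_def, bind, ← join_map_map hf, map_map (measurable_map f hf) Measurable.map_prodMk_left,
    bind]
  congr 2
  funext a
  exact map_map hf measurable_prodMk_left

end MeasureTheory.Measure

lemma gaussianReal_map_const_mul_of_sq_eq_one {a : ℝ} (ha : a ^ 2 = 1) :
    (gaussianReal 0 1).map (a * ·) = gaussianReal 0 1 := by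
  rw [gaussianReal_map_const_mul, mul_zero]
  congr
  ext
  simp [ha]

lemma measurable_bivariateGaussian : Measurable bivariateGaussian := by
  refine Measure.measurable_of_measurable_coe _ fun s hs => ?_
  have hG : Measurable fun p : ℝ × ℝ × ℝ => (p.2.1, p.1 * p.2.1 + √(1 - p.1 ^ 2) * p.2.2) := by
    fun_prop
  have h : ∀ r, bivariateGaussian r s = ((gaussianReal 0 1).prod (gaussianReal 0 1))
      ((fun uv : ℝ × ℝ => (uv.1, r * uv.1 + √(1 - r ^ 2) * uv.2)) ⁻¹' s) :=
    fun r => Measure.map_apply (by fun_prop) hs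
  simp_rw [h]
  exact measurable_measure_prodMk_left (hG hs)

lemma bivariateGaussian_of_sq_eq_one {r : ℝ} (hr : r ^ 2 = 1) :
    bivariateGaussian r = (gaussianReal 0 1).map fun u => (u, r * u) := by
  have h : (fun uv : ℝ × ℝ => (uv.1, r * uv.1 + √(1 - r ^ 2) * uv.2))
      = (fun u => (u, r * u)) ∘ Prod.fst := by
    funext uv
    simp [hr]
  rw [bivariateGaussian, h, ← Measure.map_map (by fun_prop) measurable_fst, Measure.map_fst_prod,
    measure_univ, one_smul]

lemma gaussianReal_map_prodMk_const_mul {a b : ℝ} (ha : a ^ 2 = 1) (hb : b ^ 2 = 1) :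
    (gaussianReal 0 1).map (fun u => (a * u, b * u)) = bivariateGaussian (a * b) := by
  have h : (fun u : ℝ => (a * u, b * u)) = (fun w => (w, a * b * w)) ∘ (a * ·) := by
    funext u
    simp only [Function.comp_apply, Prod.mk.injEq, true_and]
    linear_combination (-(b * u)) * ha
  rw [bivariateGaussian_of_sq_eq_one (by rw [mul_pow, ha, hb, one_mul]), h,
    ← Measure.map_map (by fun_prop) (by fun_prop), gaussianReal_map_const_mul_of_sq_eq_one ha]

lemma exists_bivariateGaussian_mixture_map_sign_mul {Ω : Type*} [MeasurableSpace Ω]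
    (P : Measure Ω) [IsProbabilityMeasure P] {s t : Ω → ℝ} (hs : Measurable s)
    (ht : Measurable t) (hs_sq : ∀ ω, s ω ^ 2 = 1) (ht_sq : ∀ ω, t ω ^ 2 = 1) :
    ∃ ν : Measure ℝ, IsProbabilityMeasure ν ∧ ν (Set.Icc (-1 : ℝ) 1)ᶜ = 0 ∧
      (P.prod (gaussianReal 0 1)).map (fun p => (s p.1 * p.2, t p.1 * p.2))
        = ν.bind bivariateGaussian := by
  refine ⟨P.map (s * t), Measure.isProbabilityMeasure_map (hs.mul ht).aemeasurable, ?_, ?_⟩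
  · rw [Measure.map_apply (hs.mul ht) measurableSet_Icc.compl]
    convert measure_empty (μ := P)
    refine Set.eq_empty_of_forall_notMem fun ω hω => hω ?_
    rw [Set.mem_Icc, ← abs_le, ← sq_le_one_iff_abs_le_one, Pi.mul_apply, mul_pow, hs_sq, ht_sq,
      one_mul]
  · rw [Measure.map_prod_eq_bind _ _ (by fun_prop),
      Measure.bind_map_eq_bind_comp _ (hs.mul ht) measurable_bivariateGaussian]
    congr
    funext ω
    exact gaussianReal_map_prodMk_const_mul (hs_sq ω) (ht_sq ω)

lemma ite_nonneg_two_mul_sub_one_mul {z u : ℝ} (hz : z = 0 ∨ z = 1) (hu : u ≠ 0) :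
    (if 0 ≤ (2 * z - 1) * u then (1 : ℝ) else 0) = if 0 < u then z else 1 - z := by
  rcases hz with rfl | rfl <;> rcases hu.lt_or_gt with hu | hu <;>
    simp [hu, hu.le, hu.not_ge, hu.not_gt]

lemma integral_sq_sub_ite_nonneg_two_mul_sub_one_mul {Ω : Type*} [MeasurableSpace Ω]
    (P : Measure Ω) [SFinite P] {z w : Ω → ℝ} (hz : ∀ ω, z ω = 0 ∨ z ω = 1)
    (hw : ∀ ω, w ω = 0 ∨ w ω = 1) :
    ∫ p, ((if 0 ≤ (2 * z p.1 - 1) * p.2 then (1 : ℝ) else 0)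
        - (if 0 ≤ (2 * w p.1 - 1) * p.2 then (1 : ℝ) else 0)) ^ 2 ∂(P.prod (gaussianReal 0 1))
      = ∫ ω, (z ω - w ω) ^ 2 ∂P := by
  have hne : ∀ᵐ p ∂(P.prod (gaussianReal 0 1)), p.2 ≠ 0 :=
    haveI := nullSingletonClass_gaussianReal (μ := 0) one_ne_zero
    Measure.quasiMeasurePreserving_snd.ae (Measure.ae_ne _ 0)
  rw [integral_congr_ae (g := fun p => (z p.1 - w p.1) ^ 2),
    integral_fun_fst fun ω => (z ω - w ω) ^ 2, probReal_univ, one_smul]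
  filter_upwards [hne] with p hp
  simp only [ite_nonneg_two_mul_sub_one_mul (hz p.1) hp,
    ite_nonneg_two_mul_sub_one_mul (hw p.1) hp]
  split_ifs <;> ring

/-- Every indicator variogram on `X` is the median indicator variogram of a Hermitian
random field: there are a probability space `(Ω, P)` and `Y : X → Ω → ℝ` such that every
bivariate law of `(Y x, Y y)` is a mixture of bivariate Gaussian laws with standard
marginals (mixing over the correlation `r ∈ [−1,1]`), and
`g (x,y) = (1/2)·E[(1_{Y x ≥ 0} − 1_{Y y ≥ 0})²]`. -/
theorem isIndicatorVariogram_is_median_of_hermitian (X : Type*) (g : X × X → ℝ)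
    (hg : IsIndicatorVariogram X g) :
    ∃ (Ω : Type) (_ : MeasurableSpace Ω) (P : Measure Ω),
      IsProbabilityMeasure P ∧
      ∃ Y : X → Ω → ℝ,
        (∀ x, Measurable (Y x)) ∧
        (∀ x y : X, ∃ ν : Measure ℝ, IsProbabilityMeasure ν ∧
          ν (Set.Icc (-1 : ℝ) 1)ᶜ = 0 ∧
          Measure.map (fun ω => (Y x ω, Y y ω)) P = ν.bind bivariateGaussian) ∧
        (∀ x y : X, g (x, y) = (1 / 2) *
          ∫ ω, ((if 0 ≤ Y x ω then (1 : ℝ) else 0) - (if 0 ≤ Y y ω then (1 : ℝ) else 0)) ^ 2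
            ∂P) := by
  obtain ⟨Ω, _, P, _, Z, hZm, hZ01, -, hgZ⟩ := hg
  have hsign_sq : ∀ x ω, (2 * Z x ω - 1) ^ 2 = 1 := fun x ω => by
    rcases hZ01 x ω with h | h <;> norm_num [h]
  refine ⟨Ω × ℝ, inferInstance, P.prod (gaussianReal 0 1), inferInstance,
    fun x p => (2 * Z x p.1 - 1) * p.2, fun x => by fun_prop, fun x y => ?_, fun x y => ?_⟩
  · exact exists_bivariateGaussian_mixture_map_sign_mul P (by fun_prop) (by fun_prop)
      (hsign_sq x) (hsign_sq y)
  · rw [hgZ, integral_sq_sub_ite_nonneg_two_mul_sub_one_mul P (hZ01 x) (hZ01 y)]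
end

section
/- Let g and g′ be indicator variograms on X and let ϖ ∈ [0,1]. Then (i) the function (x,y) ↦ ϖ·g(x,y) is an indicator variogram on X, and (ii) the function (x,y) ↦ ϖ·g(x,y) + (1−ϖ)·g′(x,y) is an indicator variogram on X. -/
/-!
If `Z` on `(Ω, P)` and `Z'` on `(Ω', P')` realise `g` and `g'`, the process `Z ⊔ Z'` on the
disjoint union `Ω ⊕ Ω'` with the mixture `ϖ P + (1 - ϖ) P'` realises `ϖ g + (1 - ϖ) g'`:
integrals against the mixture are the corresponding convex combinations, so the mean stays
constant and the variogram mixes. Scaling by `ϖ` is mixing with the zero variogram of a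
constant process.
-/

open MeasureTheory Real

open scoped ENNReal

section SumMeasure

variable {Ω Ω' E : Type*} [MeasurableSpace Ω] [MeasurableSpace Ω']
  [NormedAddCommGroup E] [NormedSpace ℝ E]

theorem measurableEmbedding_inl : MeasurableEmbedding (Sum.inl : Ω → Ω ⊕ Ω') :=
  ⟨Sum.inl_injective, measurable_inl, fun _ hs => hs.inl_image⟩

theorem measurableEmbedding_inr : MeasurableEmbedding (Sum.inr : Ω' → Ω ⊕ Ω') :=
  ⟨Sum.inr_injective, measurable_inr, fun _ hs => hs.inr_image⟩

theorem integral_sumElim_smul_map_inl_add_smul_map_inr {P : Measure Ω} {P' : Measure Ω'}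
    {f : Ω → E} {f' : Ω' → E} (hf : Integrable f P) (hf' : Integrable f' P')
    {a b : ℝ≥0∞} (ha : a ≠ ∞) (hb : b ≠ ∞) :
    ∫ ω, Sum.elim f f' ω ∂(a • P.map Sum.inl + b • P'.map Sum.inr) =
      a.toReal • ∫ ω, f ω ∂P + b.toReal • ∫ ω, f' ω ∂P' := by
  have hl : Integrable (Sum.elim f f') (P.map Sum.inl) :=
    measurableEmbedding_inl.integrable_map_iff.mpr hf
  have hr : Integrable (Sum.elim f f') (P'.map Sum.inr) :=
    measurableEmbedding_inr.integrable_map_iff.mpr hf'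
  rw [integral_add_measure (hl.smul_measure ha) (hr.smul_measure hb), integral_smul_measure,
    integral_smul_measure, measurableEmbedding_inl.integral_map,
    measurableEmbedding_inr.integral_map]
  rfl

theorem isProbabilityMeasure_smul_map_inl_add_smul_map_inr {P : Measure Ω} {P' : Measure Ω'}
    [IsProbabilityMeasure P] [IsProbabilityMeasure P'] {a b : ℝ≥0∞} (hab : a + b = 1) :
    IsProbabilityMeasure (a • P.map Sum.inl + b • P'.map Sum.inr) :=
  ⟨by simp [Measure.map_apply measurable_inl MeasurableSet.univ,
    Measure.map_apply measurable_inr MeasurableSet.univ, hab]⟩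

end SumMeasure

theorem integrable_of_forall_eq_zero_or_eq_one {Ω : Type*} [MeasurableSpace Ω] {P : Measure Ω}
    [IsFiniteMeasure P] {f : Ω → ℝ} (hf : Measurable f) (h01 : ∀ ω, f ω = 0 ∨ f ω = 1) :
    Integrable f P :=
  .of_bound hf.aestronglyMeasurable 1 <| .of_forall fun ω => by
    rcases h01 ω with h | h <;> simp [h]

theorem sq_sub_eq_zero_or_eq_one {a b : ℝ} (ha : a = 0 ∨ a = 1) (hb : b = 0 ∨ b = 1) :
    (a - b) ^ 2 = 0 ∨ (a - b) ^ 2 = 1 := by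
  rcases ha with rfl | rfl <;> rcases hb with rfl | rfl <;> norm_num

theorem isIndicatorVariogram_zero (X : Type*) : IsIndicatorVariogram X 0 :=
  ⟨Unit, inferInstance, Measure.dirac (), inferInstance, fun _ _ => 0, fun _ => measurable_const,
    fun _ _ => .inl rfl, ⟨0, fun _ => integral_zero _ _⟩, fun _ _ => by simp⟩

theorem IsIndicatorVariogram.mix {X : Type*} {g g' : X × X → ℝ}
    (hg : IsIndicatorVariogram X g) (hg' : IsIndicatorVariogram X g')
    {ϖ : ℝ} (h0 : 0 ≤ ϖ) (h1 : ϖ ≤ 1) :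
    IsIndicatorVariogram X (fun p => ϖ * g p + (1 - ϖ) * g' p) := by
  obtain ⟨Ω, _, P, _, Z, hZm, hZ01, ⟨c, hc⟩, hgZ⟩ := hg
  obtain ⟨Ω', _, P', _, Z', hZm', hZ01', ⟨c', hc'⟩, hgZ'⟩ := hg'
  have h1' : 0 ≤ 1 - ϖ := sub_nonneg.mpr h1
  set Q := ENNReal.ofReal ϖ • P.map Sum.inl + ENNReal.ofReal (1 - ϖ) • P'.map Sum.inr
  have hQ : IsProbabilityMeasure Q := isProbabilityMeasure_smul_map_inl_add_smul_map_inr <| by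
    rw [← ENNReal.ofReal_add h0 h1', add_sub_cancel, ENNReal.ofReal_one]
  have integral_Q {f : Ω → ℝ} {f' : Ω' → ℝ} (hf : Integrable f P) (hf' : Integrable f' P') :
      ∫ ω, Sum.elim f f' ω ∂Q = ϖ * ∫ ω, f ω ∂P + (1 - ϖ) * ∫ ω, f' ω ∂P' := by
    rw [integral_sumElim_smul_map_inl_add_smul_map_inr hf hf' ENNReal.ofReal_ne_top
      ENNReal.ofReal_ne_top, ENNReal.toReal_ofReal h0, ENNReal.toReal_ofReal h1', smul_eq_mul,
      smul_eq_mul]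
  refine ⟨Ω ⊕ Ω', inferInstance, Q, hQ, fun x => Sum.elim (Z x) (Z' x),
    fun x => (hZm x).sumElim (hZm' x), ?_, ⟨ϖ * c + (1 - ϖ) * c', fun x => ?_⟩, fun x y => ?_⟩
  · rintro x (ω | ω')
    exacts [hZ01 x ω, hZ01' x ω']
  · rw [integral_Q (integrable_of_forall_eq_zero_or_eq_one (hZm x) (hZ01 x))
      (integrable_of_forall_eq_zero_or_eq_one (hZm' x) (hZ01' x)), hc, hc']
  · have hsq : (fun ω => (Sum.elim (Z x) (Z' x) ω - Sum.elim (Z y) (Z' y) ω) ^ 2) =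
        Sum.elim (fun ω => (Z x ω - Z y ω) ^ 2) (fun ω' => (Z' x ω' - Z' y ω') ^ 2) := by
      ext (ω | ω') <;> rfl
    show ϖ * g (x, y) + (1 - ϖ) * g' (x, y) = _
    rw [hgZ, hgZ', hsq, integral_Q
      (integrable_of_forall_eq_zero_or_eq_one (by fun_prop)
        fun ω => sq_sub_eq_zero_or_eq_one (hZ01 x ω) (hZ01 y ω))
      (integrable_of_forall_eq_zero_or_eq_one (by fun_prop)
        fun ω' => sq_sub_eq_zero_or_eq_one (hZ01' x ω') (hZ01' y ω'))]
    ring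

/-- If `g` and `g'` are indicator variograms on `X` and `ϖ ∈ [0,1]`, then so are
`ϖ·g` and `ϖ·g + (1−ϖ)·g'`. -/
theorem indicatorVariogram_scale_and_mix (X : Type*) (g g' : X × X → ℝ)
    (hg : IsIndicatorVariogram X g) (hg' : IsIndicatorVariogram X g')
    (ϖ : ℝ) (hϖ : ϖ ∈ Set.Icc (0 : ℝ) 1) :
    IsIndicatorVariogram X (fun p => ϖ * g p) ∧
    IsIndicatorVariogram X (fun p => ϖ * g p + (1 - ϖ) * g' p) := by
  obtain ⟨h0, h1⟩ := hϖ
  refine ⟨?_, hg.mix hg' h0 h1⟩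
  simpa using hg.mix (isIndicatorVariogram_zero X) h0 h1
end

section
/- Let g and g′ be indicator variograms on X. Then the function (x,y) ↦ g(x,y) + g′(x,y) − 4·g(x,y)·g′(x,y) is an indicator variogram on X. -/
/-!
Realise `g` and `g'` by independent indicator fields `Z` on `Ω` and `Z'` on `Ω'`, and take
`W x = Z x ⊕ Z' x` (exclusive or, i.e. `a + b - 2ab` on `{0, 1}`) on `Ω × Ω'`. Since
`1 - 2 (a ⊕ b) = (1 - 2a)(1 - 2b)`, exclusive or is associative and commutative, so
`(W x - W y)² = W x ⊕ W y = (Z x ⊕ Z y) ⊕ (Z' x ⊕ Z' y)`, and `(Z x - Z y)² = Z x ⊕ Z y` has mean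
`2 g (x, y)`. By independence the mean of `U ⊕ V` is `E U + E V - 2 E U E V`, which gives
`g + g' - 4 g g'` for the new variogram and a constant mean for `W`.
-/

open MeasureTheory Real

def indicatorXor (a b : ℝ) : ℝ := a + b - 2 * a * b

section indicatorXor

variable {a b a' b' : ℝ}

lemma indicatorXor_eq_zero_or_eq_one (ha : a = 0 ∨ a = 1) (hb : b = 0 ∨ b = 1) :
    indicatorXor a b = 0 ∨ indicatorXor a b = 1 := by
  rcases ha with rfl | rfl <;> rcases hb with rfl | rfl <;> norm_num [indicatorXor]

lemma sub_sq_eq_indicatorXor (ha : a = 0 ∨ a = 1) (hb : b = 0 ∨ b = 1) :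
    (a - b) ^ 2 = indicatorXor a b := by
  rcases ha with rfl | rfl <;> rcases hb with rfl | rfl <;> norm_num [indicatorXor]

lemma indicatorXor_indicatorXor_indicatorXor_comm :
    indicatorXor (indicatorXor a b) (indicatorXor a' b') =
      indicatorXor (indicatorXor a a') (indicatorXor b b') := by
  simp only [indicatorXor]
  ring

lemma sq_sub_indicatorXor (ha : a = 0 ∨ a = 1) (hb : b = 0 ∨ b = 1) (ha' : a' = 0 ∨ a' = 1)
    (hb' : b' = 0 ∨ b' = 1) :
    (indicatorXor a b - indicatorXor a' b') ^ 2 = indicatorXor ((a - a') ^ 2) ((b - b') ^ 2) := by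
  rw [sub_sq_eq_indicatorXor (indicatorXor_eq_zero_or_eq_one ha hb)
      (indicatorXor_eq_zero_or_eq_one ha' hb'), sub_sq_eq_indicatorXor ha ha',
    sub_sq_eq_indicatorXor hb hb', indicatorXor_indicatorXor_indicatorXor_comm]

end indicatorXor

section Integral

variable {Ω Ω' : Type*} [MeasurableSpace Ω] [MeasurableSpace Ω']

lemma integrable_of_eq_zero_or_eq_one {P : Measure Ω} [IsFiniteMeasure P] {f : Ω → ℝ}
    (hf : AEStronglyMeasurable f P) (hf01 : ∀ ω, f ω = 0 ∨ f ω = 1) : Integrable f P :=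
  .of_bound hf 1 (.of_forall fun ω => by rcases hf01 ω with h | h <;> simp [h])

lemma integrable_sq_sub_of_eq_zero_or_eq_one {P : Measure Ω} [IsFiniteMeasure P] {f h : Ω → ℝ}
    (hf : Measurable f) (hh : Measurable h) (hf01 : ∀ ω, f ω = 0 ∨ f ω = 1)
    (hh01 : ∀ ω, h ω = 0 ∨ h ω = 1) : Integrable (fun ω => (f ω - h ω) ^ 2) P :=
  integrable_of_eq_zero_or_eq_one (by fun_prop) fun ω =>
    sub_sq_eq_indicatorXor (hf01 ω) (hh01 ω) ▸ indicatorXor_eq_zero_or_eq_one (hf01 ω) (hh01 ω)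

lemma integral_indicatorXor_prod {P : Measure Ω} {P' : Measure Ω'} [IsProbabilityMeasure P]
    [IsProbabilityMeasure P'] {f : Ω → ℝ} {h : Ω' → ℝ} (hf : Integrable f P)
    (hh : Integrable h P') :
    ∫ z, indicatorXor (f z.1) (h z.2) ∂(P.prod P') = indicatorXor (∫ ω, f ω ∂P) (∫ ω, h ω ∂P') := by
  have hsum : Integrable (fun z : Ω × Ω' => f z.1 + h z.2) (P.prod P') :=
    (hf.comp_fst P').add (hh.comp_snd P)
  have hfh : Integrable (fun z : Ω × Ω' => 2 * f z.1 * h z.2) (P.prod P') := by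
    simpa only [mul_assoc] using ((hf.mul_prod hh).const_mul 2)
  simp only [indicatorXor]
  rw [integral_sub hsum hfh,
    integral_add (hf.comp_fst P') (hh.comp_snd P), integral_fun_fst, integral_fun_snd]
  simp only [mul_assoc, integral_const_mul, integral_prod_mul, probReal_univ, one_smul]

end Integral

/-- If `g` and `g'` are indicator variograms on `X`, then so is `g + g' − 4·g·g'`. -/
theorem indicatorVariogram_add_sub_four_mul (X : Type*) (g g' : X × X → ℝ)
    (hg : IsIndicatorVariogram X g) (hg' : IsIndicatorVariogram X g') :
    IsIndicatorVariogram X (fun p => g p + g' p - 4 * g p * g' p) := by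
  obtain ⟨Ω, _, P, _, Z, hZm, hZ01, ⟨c, hc⟩, hgZ⟩ := hg
  obtain ⟨Ω', _, P', _, Z', hZm', hZ01', ⟨c', hc'⟩, hgZ'⟩ := hg'
  have hZi x : Integrable (Z x) P :=
    integrable_of_eq_zero_or_eq_one (hZm x).aestronglyMeasurable (hZ01 x)
  have hZi' x : Integrable (Z' x) P' :=
    integrable_of_eq_zero_or_eq_one (hZm' x).aestronglyMeasurable (hZ01' x)
  refine ⟨Ω × Ω', inferInstance, P.prod P', inferInstance,
    fun x z => indicatorXor (Z x z.1) (Z' x z.2), fun x => ?_,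
    fun x z => indicatorXor_eq_zero_or_eq_one (hZ01 x z.1) (hZ01' x z.2),
    ⟨indicatorXor c c', fun x => by rw [integral_indicatorXor_prod (hZi x) (hZi' x), hc, hc']⟩,
    fun x y => ?_⟩
  · have := hZm x
    have := hZm' x
    simp only [indicatorXor]
    fun_prop
  · calc g (x, y) + g' (x, y) - 4 * g (x, y) * g' (x, y)
        = 1 / 2 * indicatorXor (∫ ω, (Z x ω - Z y ω) ^ 2 ∂P) (∫ ω, (Z' x ω - Z' y ω) ^ 2 ∂P') := by
          rw [hgZ, hgZ', indicatorXor]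
          ring
      _ = 1 / 2 * ∫ z, (indicatorXor (Z x z.1) (Z' x z.2) - indicatorXor (Z y z.1) (Z' y z.2)) ^ 2
            ∂(P.prod P') := by
          rw [← integral_indicatorXor_prod
            (integrable_sq_sub_of_eq_zero_or_eq_one (hZm x) (hZm y) (hZ01 x) (hZ01 y))
            (integrable_sq_sub_of_eq_zero_or_eq_one (hZm' x) (hZm' y) (hZ01' x) (hZ01' y))]
          simp only [sq_sub_indicatorXor (hZ01 x _) (hZ01' x _) (hZ01 y _) (hZ01' y _)]
end

section
/- If g is an indicator variogram on X, then for every t > 0 and every ϖ ∈ [0,1], the function (x,y) ↦ (ϖ/4)·(1 − exp(−t·g(x,y))) is an indicator variogram on X. -/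
/-!
Writing `S = 1 - 2Z ∈ {±1}` for the spin of an indicator field `Z`, one has
`E[S x * S y] = 1 - 4 g(x, y)`. The product of the spins of `n` independent copies of `Z` is again
a spin, that of the indicator field `(1 - ∏ Sₖ) / 2`, whose variogram is `(1 - (1 - 4g)ⁿ) / 4`.
Indicator variograms are closed under countable convex combinations (draw the index first, then
the field), and averaging `(1 - (1 - 4g)ⁿ) / 4` over `n ∼ Poisson(t / 4)` gives
`(1 - exp (-t g)) / 4`; an atom of mass `1 - ϖ` at `n = 0` supplies the factor `ϖ`.
-/

open MeasureTheory Real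

section ZeroOne

variable {a b p q : ℝ}

lemma norm_le_one_of_eq_zero_or_eq_one (ha : a = 0 ∨ a = 1) : ‖a‖ ≤ 1 := by
  rcases ha with rfl | rfl <;> norm_num

lemma sub_sq_eq_zero_or_eq_one (ha : a = 0 ∨ a = 1) (hb : b = 0 ∨ b = 1) :
    (a - b) ^ 2 = 0 ∨ (a - b) ^ 2 = 1 := by
  rcases ha with rfl | rfl <;> rcases hb with rfl | rfl <;> norm_num

lemma sq_one_sub_two_mul_eq_one (ha : a = 0 ∨ a = 1) : (1 - 2 * a) ^ 2 = 1 := by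
  rcases ha with rfl | rfl <;> norm_num

lemma one_sub_two_mul_mul_one_sub_two_mul (ha : a = 0 ∨ a = 1) (hb : b = 0 ∨ b = 1) :
    (1 - 2 * a) * (1 - 2 * b) = 1 - 2 * (a - b) ^ 2 := by
  rcases ha with rfl | rfl <;> rcases hb with rfl | rfl <;> norm_num

lemma one_sub_div_two_eq_zero_or_eq_one (hp : p ^ 2 = 1) :
    (1 - p) / 2 = 0 ∨ (1 - p) / 2 = 1 := by
  rcases sq_eq_one_iff.mp hp with rfl | rfl <;> norm_num

lemma sq_one_sub_div_two_sub_one_sub_div_two (hp : p ^ 2 = 1) (hq : q ^ 2 = 1) :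
    ((1 - p) / 2 - (1 - q) / 2) ^ 2 = (1 - p * q) / 2 := by
  linear_combination (hp + hq) / 4

lemma sq_prod_eq_one {ι M : Type*} [CommMonoid M] (s : Finset ι) {f : ι → M} (hf : ∀ i ∈ s, f i ^ 2 = 1) :
    (∏ i ∈ s, f i) ^ 2 = 1 := by
  rw [← Finset.prod_pow]
  exact Finset.prod_eq_one hf

end ZeroOne

namespace MeasureTheory

lemma Integrable.of_eq_zero_or_eq_one {Ω : Type*} [MeasurableSpace Ω] {P : Measure Ω}
    [IsFiniteMeasure P] {f : Ω → ℝ} (hf : Measurable f) (h01 : ∀ ω, f ω = 0 ∨ f ω = 1) :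
    Integrable f P :=
  .of_bound hf.aestronglyMeasurable 1 (ae_of_all _ fun ω =>
    norm_le_one_of_eq_zero_or_eq_one (h01 ω))

lemma integral_pi_one_sub_prod_one_sub_two_mul_div_two {Ω : Type*} [MeasurableSpace Ω]
    {P : Measure Ω} [IsProbabilityMeasure P] {ξ : Ω → ℝ} (hξ : Integrable ξ P) (n : ℕ) :
    ∫ ω, (1 - ∏ i : Fin n, (1 - 2 * ξ (ω i))) / 2 ∂Measure.pi (fun _ => P)
      = (1 - (1 - 2 * ∫ ω, ξ ω ∂P) ^ n) / 2 := by
  have hspin : Integrable (fun ω => 1 - 2 * ξ ω) P := (integrable_const 1).sub (hξ.const_mul 2)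
  rw [integral_div, integral_sub (integrable_const 1) (Integrable.fintype_prod fun _ => hspin),
    integral_fintype_prod_eq_pow (fun ω => 1 - 2 * ξ ω),
    integral_sub (integrable_const 1) (hξ.const_mul 2), integral_const_mul]
  simp

section SigmaMix

variable {ι : Type*} {Ω : ι → Type*} [∀ i, MeasurableSpace (Ω i)]

lemma measurable_sigma_mk (i : ι) : Measurable (Sigma.mk i : Ω i → Σ i, Ω i) :=
  Measurable.of_le_map (iInf_le _ i)

lemma measurable_sigma_iff {β : Type*} [MeasurableSpace β] {f : (Σ i, Ω i) → β} :
    Measurable f ↔ ∀ i, Measurable fun ω => f ⟨i, ω⟩ :=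
  ⟨fun hf i => hf.comp (measurable_sigma_mk i), fun hf _ hs =>
    MeasurableSpace.measurableSet_iInf.mpr fun i => hf i hs⟩

/-- The law of `⟨i, ω⟩` where `i` has weights `w` and, given `i`, `ω` has law `P i`. -/
noncomputable def Measure.sigmaMix (w : ι → ℝ) (P : ∀ i, Measure (Ω i)) :
    Measure (Σ i, Ω i) :=
  Measure.sum fun i => ENNReal.ofReal (w i) • (P i).map (Sigma.mk i)

variable {w : ι → ℝ} {P : ∀ i, Measure (Ω i)}

lemma Measure.isProbabilityMeasure_sigmaMix [∀ i, IsProbabilityMeasure (P i)]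
    (hw0 : ∀ i, 0 ≤ w i) (hw : HasSum w 1) : IsProbabilityMeasure (Measure.sigmaMix w P) := by
  constructor
  simp_rw [Measure.sigmaMix, Measure.sum_apply _ MeasurableSet.univ, Measure.smul_apply,
    Measure.map_apply (measurable_sigma_mk _) MeasurableSet.univ, Set.preimage_univ,
    measure_univ, smul_eq_mul, mul_one]
  rw [← ENNReal.ofReal_tsum_of_nonneg hw0 hw.summable, hw.tsum_eq, ENNReal.ofReal_one]

lemma Measure.integral_sigmaMix [∀ i, IsProbabilityMeasure (P i)]
    (hw0 : ∀ i, 0 ≤ w i) (hw : HasSum w 1) {f : (Σ i, Ω i) → ℝ} (hf : Measurable f) (C : ℝ)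
    (hC : ∀ s, ‖f s‖ ≤ C) :
    ∫ s, f s ∂Measure.sigmaMix w P = ∑' i, w i * ∫ ω, f ⟨i, ω⟩ ∂P i := by
  have := isProbabilityMeasure_sigmaMix (P := P) hw0 hw
  have hint : Integrable f (Measure.sigmaMix w P) :=
    .of_bound hf.aestronglyMeasurable C (ae_of_all _ hC)
  rw [Measure.sigmaMix] at hint ⊢
  rw [integral_sum_measure hint]
  refine tsum_congr fun i => ?_
  rw [integral_smul_measure, integral_map (measurable_sigma_mk i).aemeasurable
    hf.aestronglyMeasurable, ENNReal.toReal_ofReal (hw0 i), smul_eq_mul]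

end SigmaMix

end MeasureTheory

lemma hasSum_exp_neg_mul_pow_div_factorial_mul_pow (r s : ℝ) :
    HasSum (fun n => exp (-r) * r ^ n / n.factorial * s ^ n) (exp (r * (s - 1))) := by
  have h := (NormedSpace.expSeries_div_hasSum_exp (r * s)).mul_left (exp (-r))
  rw [← exp_eq_exp_ℝ, ← exp_add] at h
  have hterm : (fun n => exp (-r) * r ^ n / n.factorial * s ^ n)
      = fun n => exp (-r) * ((r * s) ^ n / n.factorial) := by
    ext n
    rw [mul_pow]
    ring
  rwa [hterm, show r * (s - 1) = -r + r * s by ring]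

noncomputable def zeroInflatedPoisson (ϖ r : ℝ) (n : ℕ) : ℝ :=
  (if n = 0 then 1 - ϖ else 0) + ϖ * (exp (-r) * r ^ n / n.factorial)

lemma zeroInflatedPoisson_nonneg {ϖ r : ℝ} (hϖ : ϖ ∈ Set.Icc (0 : ℝ) 1) (hr : 0 ≤ r) (n : ℕ) :
    0 ≤ zeroInflatedPoisson ϖ r n :=
  add_nonneg (by split_ifs <;> linarith [hϖ.2]) (mul_nonneg hϖ.1 (by positivity))

lemma hasSum_zeroInflatedPoisson (ϖ r : ℝ) : HasSum (zeroInflatedPoisson ϖ r) 1 := by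
  unfold zeroInflatedPoisson
  simpa using (hasSum_ite_eq 0 (1 - ϖ)).add
    ((hasSum_exp_neg_mul_pow_div_factorial_mul_pow r 1).mul_left ϖ)

lemma hasSum_zeroInflatedPoisson_mul_one_sub_pow (ϖ r s : ℝ) :
    HasSum (fun n => zeroInflatedPoisson ϖ r n * ((1 - s ^ n) / 4))
      (ϖ / 4 * (1 - exp (r * (s - 1)))) := by
  have hatom (n : ℕ) : (if n = 0 then 1 - ϖ else 0) * ((1 - s ^ n) / 4) = 0 := by
    split_ifs with hn <;> simp [hn]
  have hterm : (fun n => zeroInflatedPoisson ϖ r n * ((1 - s ^ n) / 4)) = fun n => ϖ / 4 *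
      (exp (-r) * r ^ n / n.factorial * 1 ^ n - exp (-r) * r ^ n / n.factorial * s ^ n) := by
    ext n
    rw [zeroInflatedPoisson, add_mul, hatom, one_pow]
    ring
  have hpois := hasSum_exp_neg_mul_pow_div_factorial_mul_pow r
  rw [hterm]
  simpa using ((hpois 1).sub (hpois s)).mul_left (ϖ / 4)

namespace IsIndicatorVariogram

variable {X : Type*} {g : X × X → ℝ}

theorem tsum_mul {ι : Type} {w : ι → ℝ} (hw0 : ∀ i, 0 ≤ w i) (hw : HasSum w 1)
    {g : ι → X × X → ℝ} (hg : ∀ i, IsIndicatorVariogram X (g i)) :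
    IsIndicatorVariogram X fun p => ∑' i, w i * g i p := by
  choose Ω mΩ P hP Z hZm hZ01 hc hgZ using hg
  choose c hc using hc
  refine ⟨Σ i, Ω i, inferInstance, Measure.sigmaMix w P,
    Measure.isProbabilityMeasure_sigmaMix hw0 hw, fun x s => Z s.1 x s.2,
    fun x => measurable_sigma_iff.mpr fun i => hZm i x, fun x s => hZ01 s.1 x s.2,
    ⟨∑' i, w i * c i, fun x => ?_⟩, fun x y => ?_⟩
  · rw [Measure.integral_sigmaMix hw0 hw (measurable_sigma_iff.mpr fun i => hZm i x) 1
      fun s => norm_le_one_of_eq_zero_or_eq_one (hZ01 s.1 x s.2)]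
    simp only [hc]
  · rw [Measure.integral_sigmaMix hw0 hw
      (measurable_sigma_iff.mpr fun i => ((hZm i x).sub (hZm i y)).pow_const 2) 1
      fun s => norm_le_one_of_eq_zero_or_eq_one
        (sub_sq_eq_zero_or_eq_one (hZ01 s.1 x s.2) (hZ01 s.1 y s.2)),
      ← tsum_mul_left]
    exact tsum_congr fun i => by rw [hgZ]; ring

theorem one_sub_pow (hg : IsIndicatorVariogram X g) (n : ℕ) :
    IsIndicatorVariogram X fun p => (1 - (1 - 4 * g p) ^ n) / 4 := by
  obtain ⟨Ω, _, P, _, Z, hZm, hZ01, ⟨c, hc⟩, hgZ⟩ := hg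
  have hprod (x : X) (ω : Fin n → Ω) : (∏ i, (1 - 2 * Z x (ω i))) ^ 2 = 1 :=
    sq_prod_eq_one _ fun i _ => sq_one_sub_two_mul_eq_one (hZ01 x (ω i))
  refine ⟨Fin n → Ω, inferInstance, Measure.pi fun _ => P, inferInstance,
    fun x ω => (1 - ∏ i, (1 - 2 * Z x (ω i))) / 2, fun x => by fun_prop,
    fun x ω => one_sub_div_two_eq_zero_or_eq_one (hprod x ω),
    ⟨(1 - (1 - 2 * c) ^ n) / 2, fun x => ?_⟩, fun x y => ?_⟩
  · rw [integral_pi_one_sub_prod_one_sub_two_mul_div_two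
      (Integrable.of_eq_zero_or_eq_one (hZm x) (hZ01 x)), hc]
  · have hpt (ω : Fin n → Ω) :
        ((1 - ∏ i, (1 - 2 * Z x (ω i))) / 2 - (1 - ∏ i, (1 - 2 * Z y (ω i))) / 2) ^ 2
          = (1 - ∏ i, (1 - 2 * (Z x (ω i) - Z y (ω i)) ^ 2)) / 2 := by
      rw [sq_one_sub_div_two_sub_one_sub_div_two (hprod x ω) (hprod y ω),
        ← Finset.prod_mul_distrib]
      simp only [one_sub_two_mul_mul_one_sub_two_mul (hZ01 x _) (hZ01 y _)]
    simp only [hpt]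
    rw [integral_pi_one_sub_prod_one_sub_two_mul_div_two (Integrable.of_eq_zero_or_eq_one
      (by fun_prop) fun ω => sub_sq_eq_zero_or_eq_one (hZ01 x ω) (hZ01 y ω)), hgZ]
    ring

end IsIndicatorVariogram

/-- If `g` is an indicator variogram on `X`, then for every `t > 0` and `ϖ ∈ [0,1]`,
so is `(ϖ/4)·(1 − exp(−t·g))`. -/
theorem indicatorVariogram_exp_transform (X : Type*) (g : X × X → ℝ)
    (hg : IsIndicatorVariogram X g) (t : ℝ) (ht : 0 < t)
    (ϖ : ℝ) (hϖ : ϖ ∈ Set.Icc (0 : ℝ) 1) :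
    IsIndicatorVariogram X (fun p => (ϖ / 4) * (1 - Real.exp (-t * g p))) := by
  have hmix (p : X × X) : ∑' n, zeroInflatedPoisson ϖ (t / 4) n * ((1 - (1 - 4 * g p) ^ n) / 4)
      = ϖ / 4 * (1 - exp (-t * g p)) := by
    rw [(hasSum_zeroInflatedPoisson_mul_one_sub_pow ϖ (t / 4) _).tsum_eq,
      show t / 4 * (1 - 4 * g p - 1) = -t * g p by ring]
  simpa only [hmix] using IsIndicatorVariogram.tsum_mul
    (zeroInflatedPoisson_nonneg hϖ (by positivity)) (hasSum_zeroInflatedPoisson ϖ (t / 4))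
    hg.one_sub_pow
end

section
/- Let g be an indicator variogram on X. Then g satisfies the gap inequalities: for every positive integer n, all points x₁,…,xₙ ∈ X and all integers λ₁,…,λₙ ∈ ℤ, one has ∑ₖ∑ₗ λₖ λₗ g(xₖ,xₗ) ≤ (1/4)·(σ(λ)² − γ(λ)²), where σ(λ) = ∑ₖ λₖ and γ(λ) = min { |∑ₖ λₖ zₖ| : z ∈ {−1,1}ⁿ }. -/
/-!
For a `0/1` vector `z`, with `S = ∑ λₖ` and `w = ∑ λₖ zₖ`, the form `½ ∑ₖ∑ₗ λₖλₗ (zₖ - zₗ)²`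
equals `S w - w² = (S² - (2w - S)²) / 4`, and `2w - S` is the signed sum of `λ` along the sign
vector `2z - 1`, hence at least `γ(λ)` in absolute value. Apply this to the values of the
indicator field at each sample point and integrate.
-/

open MeasureTheory Real

section SignedSums

variable {ι : Type*} [Fintype ι] (lam : ι → ℝ)

noncomputable def minAbsSignedSum : ℝ :=
  sInf {v : ℝ | ∃ z : ι → ℝ, (∀ k, z k = 1 ∨ z k = -1) ∧ v = |∑ k, lam k * z k|}

theorem minAbsSignedSum_nonneg : 0 ≤ minAbsSignedSum lam :=
  Real.sInf_nonneg fun _ ⟨_, _, hv⟩ => hv ▸ abs_nonneg _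

theorem sq_minAbsSignedSum_le {z : ι → ℝ} (hz : ∀ k, z k = 1 ∨ z k = -1) :
    minAbsSignedSum lam ^ 2 ≤ (∑ k, lam k * z k) ^ 2 := by
  have hle : minAbsSignedSum lam ≤ |∑ k, lam k * z k| :=
    csInf_le ⟨0, fun _ ⟨_, _, hv⟩ => hv ▸ abs_nonneg _⟩ ⟨z, hz, rfl⟩
  simpa only [sq_abs] using pow_le_pow_left₀ (minAbsSignedSum_nonneg lam) hle 2

theorem sum_sum_mul_half_sq_sub (z : ι → ℝ) :
    ∑ k, ∑ l, lam k * lam l * ((1 / 2) * (z k - z l) ^ 2) =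
      (∑ k, lam k) * (∑ k, lam k * z k ^ 2) - (∑ k, lam k * z k) ^ 2 := by
  have expand : ∀ k l, lam k * lam l * ((1 / 2) * (z k - z l) ^ 2) =
      (1 / 2) * (lam k * z k ^ 2 * lam l) + (1 / 2) * (lam k * (lam l * z l ^ 2)) -
        lam k * z k * (lam l * z l) := fun k l => by ring
  simp only [expand, Finset.sum_add_distrib, Finset.sum_sub_distrib, ← Finset.mul_sum,
    ← Finset.sum_mul, sq (∑ k, lam k * z k)]
  ring

theorem sum_sum_mul_half_sq_sub_le_of_indicator {z : ι → ℝ} (hz : ∀ k, z k = 0 ∨ z k = 1) :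
    ∑ k, ∑ l, lam k * lam l * ((1 / 2) * (z k - z l) ^ 2) ≤
      (1 / 4) * ((∑ k, lam k) ^ 2 - minAbsSignedSum lam ^ 2) := by
  have hidem : ∀ k, z k ^ 2 = z k := fun k => by rcases hz k with h | h <;> simp [h]
  have hsign : ∀ k, 2 * z k - 1 = 1 ∨ 2 * z k - 1 = -1 := fun k => by
    rcases hz k with h | h <;> norm_num [h]
  have hsigned : ∑ k, lam k * (2 * z k - 1) = 2 * ∑ k, lam k * z k - ∑ k, lam k := by
    simp only [mul_sub, mul_one, Finset.sum_sub_distrib, Finset.mul_sum]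
    ring_nf
  have hgap := sq_minAbsSignedSum_le lam hsign
  rw [hsigned] at hgap
  rw [sum_sum_mul_half_sq_sub]
  simp only [hidem]
  linear_combination (1 / 4) * hgap

end SignedSums

theorem integrable_sq_sub_of_indicator {Ω : Type*} [MeasurableSpace Ω] {P : Measure Ω}
    [IsFiniteMeasure P] {f h : Ω → ℝ} (hf : Measurable f) (hh : Measurable h)
    (hf01 : ∀ ω, f ω = 0 ∨ f ω = 1) (hh01 : ∀ ω, h ω = 0 ∨ h ω = 1) :
    Integrable (fun ω => (f ω - h ω) ^ 2) P :=
  .of_bound ((hf.sub hh).pow_const 2).aestronglyMeasurable 1 <| ae_of_all _ fun ω => by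
    rcases hf01 ω with hfω | hfω <;> rcases hh01 ω with hhω | hhω <;> norm_num [hfω, hhω]

theorem indicatorVariogram_gap_inequalities_general (X : Type*) (g : X × X → ℝ)
    (hg : IsIndicatorVariogram X g)
    (n : ℕ) (x : Fin n → X) (lam : Fin n → ℤ) :
    ∑ k, ∑ l, ((lam k : ℝ) * (lam l : ℝ)) * g (x k, x l) ≤
      (1 / 4) * (((∑ k, lam k : ℤ) : ℝ) ^ 2 -
        (sInf {v : ℝ | ∃ z : Fin n → ℝ, (∀ k, z k = 1 ∨ z k = -1) ∧
          v = |∑ k, (lam k : ℝ) * z k|}) ^ 2) := by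
  obtain ⟨Ω, _, P, _, Z, hmeas, h01, -, hgZ⟩ := hg
  set c : Fin n → ℝ := fun k => lam k
  have hint : ∀ k l, Integrable
      (fun ω => c k * c l * ((1 / 2) * (Z (x k) ω - Z (x l) ω) ^ 2)) P := fun k l =>
    ((integrable_sq_sub_of_indicator (hmeas _) (hmeas _) (h01 _) (h01 _)).const_mul _).const_mul _
  have hint_sum : Integrable
      (fun ω => ∑ k, ∑ l, c k * c l * ((1 / 2) * (Z (x k) ω - Z (x l) ω) ^ 2)) P :=
    integrable_finsetSum _ fun k _ => integrable_finsetSum _ fun l _ => hint k l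
  calc ∑ k, ∑ l, c k * c l * g (x k, x l)
      = ∫ ω, ∑ k, ∑ l, c k * c l * ((1 / 2) * (Z (x k) ω - Z (x l) ω) ^ 2) ∂P := by
        rw [integral_finsetSum _ fun k _ => integrable_finsetSum _ fun l _ => hint k l]
        simp only [integral_finsetSum _ fun l _ => hint _ l, integral_const_mul, hgZ]
    _ ≤ ∫ _, (1 / 4) * ((∑ k, c k) ^ 2 - minAbsSignedSum c ^ 2) ∂P :=
        integral_mono hint_sum (integrable_const _)
          fun ω => sum_sum_mul_half_sq_sub_le_of_indicator c fun k => h01 (x k) ω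
    _ = _ := by simp [c, minAbsSignedSum]

/-- Every indicator variogram satisfies the gap inequalities: for integers `λ₁,…,λₙ`,
`∑ₖ∑ₗ λₖ λₗ g(xₖ,xₗ) ≤ (1/4)·(σ(λ)² − γ(λ)²)`, where `σ(λ) = ∑ₖ λₖ` and
`γ(λ) = min {|∑ₖ λₖ zₖ| : z ∈ {−1,1}ⁿ}`. -/
theorem indicatorVariogram_gap_inequalities (X : Type*) (g : X × X → ℝ)
    (hg : IsIndicatorVariogram X g)
    (n : ℕ) (hn : 0 < n) (x : Fin n → X) (lam : Fin n → ℤ) :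
    ∑ k, ∑ l, ((lam k : ℝ) * (lam l : ℝ)) * g (x k, x l) ≤
      (1 / 4) * (((∑ k, lam k : ℤ) : ℝ) ^ 2 -
        (sInf {v : ℝ | ∃ z : Fin n → ℝ, (∀ k, z k = 1 ∨ z k = -1) ∧
          v = |∑ k, (lam k : ℝ) * z k|}) ^ 2) :=
  indicatorVariogram_gap_inequalities_general X g hg n x lam
end

section
/- Let g be an indicator variogram on X. Then g satisfies the hypermetric inequalities: for every positive integer n, all points x₁,…,xₙ ∈ X and all integers λ₁,…,λₙ ∈ ℤ with ∑ₖ λₖ = 1, one has ∑ₖ∑ₗ λₖ λₗ g(xₖ,xₗ) ≤ 0. -/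
/-!
For a `{0,1}`-valued vector `a` and weights `λ` summing to `1`,
`∑ₖ∑ₗ λₖλₗ (aₖ - aₗ)² = 2 (S - S²)` with `S = ∑ₖ λₖaₖ`, since `aₖ² = aₖ`. When the `λₖ` are
integers so is `S`, hence `S ≤ S²`. Integrating this pointwise inequality over `Ω` gives the
hypermetric inequality for `g`.
-/

open MeasureTheory Real

theorem Finset.sum_sum_mul_mul_sub_sq {ι R : Type*} [CommRing R] (s : Finset ι) (w a : ι → R) :
    ∑ k ∈ s, ∑ l ∈ s, w k * w l * (a k - a l) ^ 2 =
      2 * ((∑ k ∈ s, w k) * ∑ k ∈ s, w k * a k ^ 2 - (∑ k ∈ s, w k * a k) ^ 2) := by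
  have hexpand : ∀ k l, w k * w l * (a k - a l) ^ 2 =
      w k * a k ^ 2 * w l + w k * (w l * a l ^ 2) - 2 * ((w k * a k) * (w l * a l)) := by
    intro k l; ring
  simp only [hexpand, Finset.sum_sub_distrib, Finset.sum_add_distrib, ← Finset.mul_sum,
    ← Finset.sum_mul]
  ring

theorem Int.sum_sum_mul_mul_sub_sq_nonpos {ι : Type*} (s : Finset ι) (lam b : ι → ℤ)
    (hlam : ∑ k ∈ s, lam k = 1) (hb : ∀ k ∈ s, b k = 0 ∨ b k = 1) :
    ∑ k ∈ s, ∑ l ∈ s, lam k * lam l * (b k - b l) ^ 2 ≤ 0 := by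
  have hidem : ∀ k ∈ s, lam k * b k ^ 2 = lam k * b k := by
    intro k hk; rcases hb k hk with h | h <;> simp [h]
  rw [Finset.sum_sum_mul_mul_sub_sq, hlam, one_mul, Finset.sum_congr rfl hidem]
  nlinarith [Int.le_self_sq (∑ k ∈ s, lam k * b k)]

theorem sum_sum_mul_mul_sub_sq_nonpos_of_mem_zero_one {ι : Type*} (s : Finset ι)
    (lam : ι → ℤ) (a : ι → ℝ) (hlam : ∑ k ∈ s, lam k = 1) (ha : ∀ k ∈ s, a k = 0 ∨ a k = 1) :
    ∑ k ∈ s, ∑ l ∈ s, (lam k : ℝ) * lam l * (a k - a l) ^ 2 ≤ 0 := by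
  have hint : ∀ k ∈ s, ∃ m : ℤ, (m = 0 ∨ m = 1) ∧ a k = m := fun k hk => by
    rcases ha k hk with h | h
    · exact ⟨0, by simp [h]⟩
    · exact ⟨1, by simp [h]⟩
  choose! b hb hab using hint
  rw [Finset.sum_congr rfl fun k hk => Finset.sum_congr rfl fun l hl => by rw [hab k hk, hab l hl]]
  exact_mod_cast Int.sum_sum_mul_mul_sub_sq_nonpos s lam b hlam hb

theorem integrable_sub_sq_of_mem_zero_one {Ω : Type*} [MeasurableSpace Ω] {μ : Measure Ω}
    [IsFiniteMeasure μ] {f g : Ω → ℝ} (hf : Measurable f) (hg : Measurable g)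
    (hf01 : ∀ ω, f ω = 0 ∨ f ω = 1) (hg01 : ∀ ω, g ω = 0 ∨ g ω = 1) :
    Integrable (fun ω => (f ω - g ω) ^ 2) μ := by
  refine Integrable.of_bound ((hf.sub hg).pow_const 2).aestronglyMeasurable 1
    (ae_of_all _ fun ω => ?_)
  rcases hf01 ω with h1 | h1 <;> rcases hg01 ω with h2 | h2 <;> norm_num [h1, h2]

theorem integral_finsetSum_finsetSum {Ω ι κ : Type*} [MeasurableSpace Ω] {μ : Measure Ω}
    (s : Finset ι) (t : Finset κ) (f : ι → κ → Ω → ℝ) (hf : ∀ i j, Integrable (f i j) μ) :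
    ∫ ω, ∑ i ∈ s, ∑ j ∈ t, f i j ω ∂μ = ∑ i ∈ s, ∑ j ∈ t, ∫ ω, f i j ω ∂μ := by
  rw [integral_finsetSum _ fun i _ => integrable_finsetSum _ fun j _ => hf i j]
  exact Finset.sum_congr rfl fun i _ => integral_finsetSum _ fun j _ => hf i j

theorem indicatorVariogram_hypermetric_general (X : Type*) (g : X × X → ℝ)
    (hg : IsIndicatorVariogram X g)
    (n : ℕ) (x : Fin n → X) (lam : Fin n → ℤ)
    (hsum : ∑ k, lam k = 1) :
    ∑ k, ∑ l, ((lam k : ℝ) * (lam l : ℝ)) * g (x k, x l) ≤ 0 := by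
  obtain ⟨Ω, _, P, _, Z, hZm, hZ01, -, hgZ⟩ := hg
  have hform : ∑ k, ∑ l, ((lam k : ℝ) * (lam l : ℝ)) * g (x k, x l) =
      (1 / 2) * ∫ ω, ∑ k, ∑ l, (lam k : ℝ) * lam l * (Z (x k) ω - Z (x l) ω) ^ 2 ∂P := by
    have hint : ∀ k l, Integrable (fun ω => (Z (x k) ω - Z (x l) ω) ^ 2) P := fun k l =>
      integrable_sub_sq_of_mem_zero_one (hZm _) (hZm _) (hZ01 _) (hZ01 _)
    rw [integral_finsetSum_finsetSum _ _ _ fun k l => (hint k l).const_mul _, Finset.mul_sum]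
    simp only [hgZ, Finset.mul_sum, integral_const_mul]
    exact Finset.sum_congr rfl fun k _ => Finset.sum_congr rfl fun l _ => by ring
  rw [hform]
  exact mul_nonpos_of_nonneg_of_nonpos (by norm_num) <| integral_nonpos fun ω =>
    sum_sum_mul_mul_sub_sq_nonpos_of_mem_zero_one _ lam (fun k => Z (x k) ω) hsum
      fun k _ => hZ01 _ ω

/-- Every indicator variogram satisfies the hypermetric inequalities: for all integers
`λ₁,…,λₙ` with `∑ₖ λₖ = 1`, `∑ₖ∑ₗ λₖ λₗ g(xₖ,xₗ) ≤ 0`. -/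
theorem indicatorVariogram_hypermetric (X : Type*) (g : X × X → ℝ)
    (hg : IsIndicatorVariogram X g)
    (n : ℕ) (hn : 0 < n) (x : Fin n → X) (lam : Fin n → ℤ)
    (hsum : ∑ k, lam k = 1) :
    ∑ k, ∑ l, ((lam k : ℝ) * (lam l : ℝ)) * g (x k, x l) ≤ 0 :=
  indicatorVariogram_hypermetric_general X g hg n x lam hsum
end

section
/- Let g be an indicator variogram on X. Then g satisfies the corner-positive inequalities: for every integer n ≥ 2, all points x₁,…,xₙ ∈ X and every real n × n matrix (λ_{kℓ}) that is corner-positive (i.e., ∑ₖ∑ₗ εₖ εₗ λ_{kℓ} ≥ 0 for every ε ∈ {−1,1}ⁿ), one has ∑ₖ∑ₗ λ_{kℓ}·(1 − 4·g(xₖ,xₗ)) ≥ 0. -/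
open MeasureTheory Real

/-!
The indicators `Z x` become random signs `σ x = 2 Z x - 1`, and since `(Z x - Z y)² = (1 - σ x σ y) / 2`
we get `1 - 4 g(x, y) = E[σ x σ y]`. Hence `∑ₖ∑ₗ Λ k l (1 - 4 g(xₖ, xₗ))` is the expectation of
`∑ₖ∑ₗ Λ k l σ(xₖ) σ(xₗ)`, which is nonnegative pointwise by corner positivity.
-/

def IsCornerPositive {ι : Type*} [Fintype ι] (Λ : ι → ι → ℝ) : Prop :=
  ∀ ε : ι → ℝ, (∀ k, ε k = 1 ∨ ε k = -1) → 0 ≤ ∑ k, ∑ l, ε k * ε l * Λ k l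

theorem IsCornerPositive.sum_mul_integral_nonneg {ι Ω : Type*} [Fintype ι] [MeasurableSpace Ω]
    {P : Measure Ω} [IsFiniteMeasure P] {Λ : ι → ι → ℝ} (hΛ : IsCornerPositive Λ)
    {σ : ι → Ω → ℝ} (hσm : ∀ k, AEStronglyMeasurable (σ k) P)
    (hσ : ∀ k ω, σ k ω = 1 ∨ σ k ω = -1) :
    0 ≤ ∑ k, ∑ l, Λ k l * ∫ ω, σ k ω * σ l ω ∂P := by
  have hint : ∀ k l, Integrable (fun ω => Λ k l * (σ k ω * σ l ω)) P := fun k l =>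
    (Integrable.of_bound ((hσm k).mul (hσm l)) 1 (ae_of_all _ fun ω => by
      rcases hσ k ω with h | h <;> rcases hσ l ω with h' | h' <;> simp [h, h'])).const_mul _
  calc 0 ≤ ∫ ω, ∑ k, ∑ l, Λ k l * (σ k ω * σ l ω) ∂P :=
        integral_nonneg fun ω => by
          simpa only [Pi.zero_apply, mul_comm (Λ _ _)] using hΛ (σ · ω) (hσ · ω)
    _ = ∑ k, ∑ l, Λ k l * ∫ ω, σ k ω * σ l ω ∂P := by
        rw [integral_finsetSum _ fun k _ => integrable_finsetSum _ fun l _ => hint k l]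
        simp_rw [integral_finsetSum _ fun l _ => hint _ l, integral_const_mul]

theorem two_mul_sub_one_eq_one_or_neg_one {a : ℝ} (ha : a = 0 ∨ a = 1) :
    2 * a - 1 = 1 ∨ 2 * a - 1 = -1 := by
  rcases ha with rfl | rfl <;> norm_num

theorem two_mul_sub_one_mul_two_mul_sub_one {a b : ℝ} (ha : a = 0 ∨ a = 1) (hb : b = 0 ∨ b = 1) :
    (2 * a - 1) * (2 * b - 1) = 1 - 2 * (a - b) ^ 2 := by
  rcases ha with rfl | rfl <;> rcases hb with rfl | rfl <;> norm_num

theorem integral_two_mul_sub_one_mul_two_mul_sub_one {Ω : Type*} [MeasurableSpace Ω]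
    {P : Measure Ω} [IsProbabilityMeasure P] {U V : Ω → ℝ}
    (hUm : AEStronglyMeasurable U P) (hVm : AEStronglyMeasurable V P)
    (hU : ∀ ω, U ω = 0 ∨ U ω = 1) (hV : ∀ ω, V ω = 0 ∨ V ω = 1) :
    ∫ ω, (2 * U ω - 1) * (2 * V ω - 1) ∂P = 1 - 2 * ∫ ω, (U ω - V ω) ^ 2 ∂P := by
  have hint : Integrable (fun ω => (U ω - V ω) ^ 2) P :=
    Integrable.of_bound ((hUm.sub hVm).pow 2) 1 (ae_of_all _ fun ω => by
      rcases hU ω with h | h <;> rcases hV ω with h' | h' <;> simp [h, h'])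
  simp_rw [two_mul_sub_one_mul_two_mul_sub_one (hU _) (hV _)]
  rw [integral_sub (integrable_const 1) (hint.const_mul 2), integral_const_mul]
  simp

theorem indicatorVariogram_corner_positive_general (X : Type*) (g : X × X → ℝ)
    (hg : IsIndicatorVariogram X g)
    (n : ℕ) (x : Fin n → X) (Λ : Fin n → Fin n → ℝ)
    (hΛ : ∀ ε : Fin n → ℝ, (∀ k, ε k = 1 ∨ ε k = -1) →
      0 ≤ ∑ k, ∑ l, ε k * ε l * Λ k l) :
    0 ≤ ∑ k, ∑ l, Λ k l * (1 - 4 * g (x k, x l)) := by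
  obtain ⟨Ω, _, P, _, Z, hZm, hZ, -, hgZ⟩ := hg
  have hcorr : ∀ k l, 1 - 4 * g (x k, x l) =
      ∫ ω, (2 * Z (x k) ω - 1) * (2 * Z (x l) ω - 1) ∂P := fun k l => by
    rw [integral_two_mul_sub_one_mul_two_mul_sub_one (hZm _).aestronglyMeasurable
      (hZm _).aestronglyMeasurable (hZ _) (hZ _), hgZ]
    ring
  simp_rw [hcorr]
  exact IsCornerPositive.sum_mul_integral_nonneg (P := P) hΛ
    (fun k => ((hZm (x k)).const_mul 2 |>.sub_const 1).aestronglyMeasurable)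
    (fun k ω => two_mul_sub_one_eq_one_or_neg_one (hZ (x k) ω))

/-- Every indicator variogram satisfies the corner-positive inequalities: for every
`n ≥ 2`, points `x₁,…,xₙ` and corner-positive matrix `(Λ k l)` (that is,
`∑ₖ∑ₗ εₖ εₗ Λ k l ≥ 0` for all `ε ∈ {−1,1}ⁿ`), one has
`∑ₖ∑ₗ Λ k l (1 − 4 g(xₖ,xₗ)) ≥ 0`. -/
theorem indicatorVariogram_corner_positive (X : Type*) (g : X × X → ℝ)
    (hg : IsIndicatorVariogram X g)
    (n : ℕ) (hn : 2 ≤ n) (x : Fin n → X) (Λ : Fin n → Fin n → ℝ)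
    (hΛ : ∀ ε : Fin n → ℝ, (∀ k, ε k = 1 ∨ ε k = -1) →
      0 ≤ ∑ k, ∑ l, ε k * ε l * Λ k l) :
    0 ≤ ∑ k, ∑ l, Λ k l * (1 - 4 * g (x k, x l)) :=
  indicatorVariogram_corner_positive_general X g hg n x Λ hΛ
end

section
/- A function γ¹ : X × X → ℝ is the madogram of a family Z : X → Ω → ℝ of random variables taking values in [0,1] and having a stationary marginal distribution if and only if γ¹ is an indicator variogram on X. -/
open MeasureTheory Real

lemma sq_sub_eq_abs_sub_of_zero_or_one {a b : ℝ} (ha : a = 0 ∨ a = 1) (hb : b = 0 ∨ b = 1) :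
    (a - b) ^ 2 = |a - b| := by
  rcases ha with rfl | rfl <;> rcases hb with rfl | rfl <;> norm_num

lemma integrable_of_zero_or_one {Ω : Type*} [MeasurableSpace Ω] {P : Measure Ω}
    [IsFiniteMeasure P] {Z : Ω → ℝ} (hZ : Measurable Z) (h01 : ∀ ω, Z ω = 0 ∨ Z ω = 1) :
    Integrable Z P :=
  .of_bound hZ.aestronglyMeasurable 1 <| .of_forall fun ω => by
    rcases h01 ω with h | h <;> simp [h]

section ZeroOneLaw

variable {Ω : Type*} [MeasurableSpace Ω] {P : Measure Ω} [IsProbabilityMeasure P]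
  {Z Z' : Ω → ℝ}

lemma measureReal_preimage_of_zero_or_one (hZ : Measurable Z) (h01 : ∀ ω, Z ω = 0 ∨ Z ω = 1)
    {s : Set ℝ} (hs : MeasurableSet s) :
    P.real (Z ⁻¹' s) =
      s.indicator 1 0 * (1 - ∫ ω, Z ω ∂P) + s.indicator 1 1 * ∫ ω, Z ω ∂P := by
  have hpoint : (Z ⁻¹' s).indicator 1 =
      fun ω => s.indicator 1 0 * (1 - Z ω) + s.indicator 1 1 * Z ω := by
    funext ω
    change s.indicator 1 (Z ω) = _
    rcases h01 ω with h | h <;> simp [h]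
  have hint : Integrable Z P := integrable_of_zero_or_one hZ h01
  have hint₀ : Integrable (fun ω => s.indicator 1 0 * (1 - Z ω)) P :=
    ((integrable_const 1).sub hint).const_mul _
  rw [← integral_indicator_one (hZ hs)]
  simp only [hpoint]
  rw [integral_add hint₀ (hint.const_mul _), integral_const_mul, integral_const_mul,
    integral_sub (integrable_const _) hint]
  simp

lemma map_eq_map_of_zero_or_one_of_integral_eq (hZ : Measurable Z) (hZ' : Measurable Z')
    (h01 : ∀ ω, Z ω = 0 ∨ Z ω = 1) (h01' : ∀ ω, Z' ω = 0 ∨ Z' ω = 1)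
    (hmean : ∫ ω, Z ω ∂P = ∫ ω, Z' ω ∂P) : P.map Z = P.map Z' := by
  ext s hs
  rw [Measure.map_apply hZ hs, Measure.map_apply hZ' hs,
    ← ENNReal.toReal_eq_toReal_iff' (measure_ne_top _ _) (measure_ne_top _ _)]
  simp_rw [← measureReal_def]
  rw [measureReal_preimage_of_zero_or_one hZ h01 hs,
    measureReal_preimage_of_zero_or_one hZ' h01' hs, hmean]

end ZeroOneLaw

instance : IsProbabilityMeasure (volume.restrict (Set.Icc (0 : ℝ) 1)) :=
  ⟨by simp⟩

lemma integral_indicator_Iio_unitInterval {a : ℝ} (ha : a ∈ Set.Icc (0 : ℝ) 1) :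
    ∫ u in Set.Icc 0 1, (Set.Iio a).indicator 1 u = a := by
  have hinter : Set.Iio a ∩ Set.Icc 0 1 = Set.Ico 0 a := Set.ext fun u => by
    simp only [Set.mem_inter_iff, Set.mem_Iio, Set.mem_Icc, Set.mem_Ico]
    exact ⟨fun h => ⟨h.2.1, h.1⟩, fun h => ⟨h.2, h.1, h.2.le.trans ha.2⟩⟩
  rw [integral_indicator_one measurableSet_Iio, measureReal_restrict_apply measurableSet_Iio,
    hinter, Real.volume_real_Ico]
  simp [ha.1]

lemma integral_abs_sub_indicator_Iio_unitInterval {a b : ℝ} (ha : a ∈ Set.Icc (0 : ℝ) 1)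
    (hb : b ∈ Set.Icc (0 : ℝ) 1) :
    ∫ u in Set.Icc 0 1, |(Set.Iio a).indicator 1 u - (Set.Iio b).indicator (1 : ℝ → ℝ) u|
      = |a - b| := by
  wlog hab : a ≤ b generalizing a b
  · simpa only [abs_sub_comm] using this hb ha (le_of_not_ge hab)
  have hle (u : ℝ) : (Set.Iio a).indicator (1 : ℝ → ℝ) u ≤ (Set.Iio b).indicator 1 u :=
    Set.indicator_le_indicator_of_subset (Set.Iio_subset_Iio hab) (fun _ => zero_le_one) u
  simp_rw [abs_sub_comm _ ((Set.Iio b).indicator 1 _), abs_of_nonneg (sub_nonneg.2 (hle _))]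
  rw [integral_sub ((integrable_const 1).indicator measurableSet_Iio)
      ((integrable_const 1).indicator measurableSet_Iio),
    integral_indicator_Iio_unitInterval hb, integral_indicator_Iio_unitInterval ha,
    abs_sub_comm, abs_of_nonneg (sub_nonneg.2 hab)]

section Subgraph

variable {Ω : Type*}

noncomputable def subgraphIndicator (f : Ω → ℝ) : Ω × ℝ → ℝ :=
  {p | p.2 < f p.1}.indicator 1

lemma subgraphIndicator_eq_zero_or_one (f : Ω → ℝ) (p : Ω × ℝ) :
    subgraphIndicator f p = 0 ∨ subgraphIndicator f p = 1 :=
  Set.indicator_eq_zero_or_self _ _ _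

variable [MeasurableSpace Ω] {f g : Ω → ℝ}

lemma Measurable.subgraphIndicator (hf : Measurable f) : Measurable (subgraphIndicator f) :=
  measurable_const.indicator (measurableSet_lt measurable_snd (hf.comp measurable_fst))

lemma integrable_subgraphIndicator {μ : Measure (Ω × ℝ)} [IsFiniteMeasure μ]
    (hf : Measurable f) : Integrable (subgraphIndicator f) μ :=
  integrable_of_zero_or_one hf.subgraphIndicator (subgraphIndicator_eq_zero_or_one f)

variable {P : Measure Ω} [IsProbabilityMeasure P]

lemma integral_subgraphIndicator (hf : Measurable f) (hf01 : ∀ ω, f ω ∈ Set.Icc (0 : ℝ) 1) :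
    ∫ p, subgraphIndicator f p ∂(P.prod (volume.restrict (Set.Icc 0 1)))
      = ∫ ω, f ω ∂P := by
  rw [integral_prod _ (integrable_subgraphIndicator hf)]
  exact integral_congr_ae (.of_forall fun ω => integral_indicator_Iio_unitInterval (hf01 ω))

lemma integral_sq_sub_subgraphIndicator (hf : Measurable f) (hg : Measurable g)
    (hf01 : ∀ ω, f ω ∈ Set.Icc (0 : ℝ) 1) (hg01 : ∀ ω, g ω ∈ Set.Icc (0 : ℝ) 1) :
    ∫ p, (subgraphIndicator f p - subgraphIndicator g p) ^ 2
        ∂(P.prod (volume.restrict (Set.Icc 0 1)))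
      = ∫ ω, |f ω - g ω| ∂P := by
  simp_rw [sq_sub_eq_abs_sub_of_zero_or_one (subgraphIndicator_eq_zero_or_one f _)
    (subgraphIndicator_eq_zero_or_one g _)]
  rw [integral_prod (fun p => |_ - _|)
    ((integrable_subgraphIndicator hf).sub (integrable_subgraphIndicator hg)).abs]
  exact integral_congr_ae (.of_forall fun ω =>
    integral_abs_sub_indicator_Iio_unitInterval (hf01 ω) (hg01 ω))

end Subgraph

/-- `γ1` is the madogram of a family of random variables with values in `[0,1]` and
stationary marginal distribution iff `γ1` is an indicator variogram on `X`. -/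
theorem madogram_of_unit_interval_stationary_iff_indicatorVariogram
    (X : Type*) (γ1 : X × X → ℝ) :
    (∃ (Ω : Type) (_ : MeasurableSpace Ω) (P : Measure Ω),
      IsProbabilityMeasure P ∧
      ∃ Z : X → Ω → ℝ,
        (∀ x, Measurable (Z x)) ∧
        (∀ x ω, Z x ω ∈ Set.Icc (0 : ℝ) 1) ∧
        (∀ x y : X, Measure.map (Z x) P = Measure.map (Z y) P) ∧
        (∀ x y : X, γ1 (x, y) = (1 / 2) * ∫ ω, |Z x ω - Z y ω| ∂P)) ↔
    IsIndicatorVariogram X γ1 := by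
  constructor
  · rintro ⟨Ω, _, P, _, Z, hZ, hZ01, hlaw, hγ⟩
    have hmean (x y : X) : ∫ ω, Z x ω ∂P = ∫ ω, Z y ω ∂P :=
      ProbabilityTheory.IdentDistrib.integral_eq
        ⟨(hZ x).aemeasurable, (hZ y).aemeasurable, hlaw x y⟩
    refine ⟨Ω × ℝ, inferInstance, P.prod (volume.restrict (Set.Icc 0 1)), inferInstance,
      fun x => subgraphIndicator (Z x), fun x => (hZ x).subgraphIndicator,
      fun x => subgraphIndicator_eq_zero_or_one (Z x), ?_, fun x y => ?_⟩
    · simp_rw [integral_subgraphIndicator (hZ _) (hZ01 _)]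
      rcases isEmpty_or_nonempty X with hX | ⟨⟨x₀⟩⟩
      · exact ⟨0, isEmptyElim⟩
      · exact ⟨_, fun x => hmean x x₀⟩
    · rw [hγ, integral_sq_sub_subgraphIndicator (hZ x) (hZ y) (hZ01 x) (hZ01 y)]
  · rintro ⟨Ω, _, P, _, Z, hZ, hZ01, ⟨c, hc⟩, hγ⟩
    refine ⟨Ω, inferInstance, P, inferInstance, Z, hZ, fun x ω => ?_, fun x y =>
      map_eq_map_of_zero_or_one_of_integral_eq (hZ x) (hZ y) (hZ01 x) (hZ01 y)
        ((hc x).trans (hc y).symm), fun x y => ?_⟩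
    · rcases hZ01 x ω with h | h <;> simp [h]
    · rw [hγ]
      simp_rw [sq_sub_eq_abs_sub_of_zero_or_one (hZ01 x _) (hZ01 y _)]
end

section
/- Let N ≥ 1 and let X = { x ∈ ℝ^{N+1} : ‖x‖ = 1 } be the unit N-sphere, with geodesic (great-circle) distance d(x,y) = arccos(⟨x,y⟩). Then for every ϖ ∈ [0,1], the function g(x,y) = ϖ·d(x,y)/(2π) = ϖ·arccos(⟨x,y⟩)/(2π) is an indicator variogram on X. -/
/-!
Let `U` be a standard Gaussian vector and `Z x = 1{⟪x, U⟫ > 0}`. Then `Z x` has mean `1 / 2`,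
and `Z x ≠ Z y` exactly when the hyperplane `U⊥` separates `x` and `y`. Writing
`y = cos θ • x + sin θ • w` with `w ⊥ x` a unit vector, the pair `(⟪x, U⟫, ⟪w, U⟫)` is a standard
Gaussian on `ℝ²`; its density is radial, so in polar coordinates `x` and `y` are separated with
probability `θ / π`, and `θ / (2π)` is an indicator variogram. Multiplying `Z` by an independent
Bernoulli(`ϖ`) variable multiplies the variogram by `ϖ`.
-/

open MeasureTheory ProbabilityTheory Real Set Module
open scoped RealInnerProductSpace ENNReal

theorem IsIndicatorVariogram.const_mul {X : Type*} {g : X × X → ℝ} (hg : IsIndicatorVariogram X g)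
    {c : ℝ} (hc : c ∈ Icc 0 1) : IsIndicatorVariogram X (fun q => c * g q) := by
  obtain ⟨Ω, _, P, _, Z, hZm, hZ01, ⟨m, hm⟩, hZg⟩ := hg
  set ν : Measure ℝ := volume.restrict (Ioc 0 1)
  have : IsProbabilityMeasure ν := ⟨by simp [ν]⟩
  set coin : ℝ → ℝ := (Iic c).indicator 1
  have hcoin : ∫ t, coin t ∂ν = c := by
    rw [integral_indicator_one measurableSet_Iic, measureReal_restrict_apply measurableSet_Iic,
      Iic_inter_Ioc_of_le hc.2, measureReal_def, volume_Ioc, sub_zero, ENNReal.toReal_ofReal hc.1]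
  have hcoin01 (t : ℝ) : coin t = 0 ∨ coin t = 1 := by
    by_cases ht : t ∈ Iic c <;> simp [coin, ht]
  refine ⟨Ω × ℝ, inferInstance, P.prod ν, inferInstance, fun x ω => Z x ω.1 * coin ω.2,
    fun x => ((hZm x).comp measurable_fst).mul
      ((measurable_one.indicator measurableSet_Iic).comp measurable_snd),
    fun x ω => ?_, ⟨m * c, fun x => ?_⟩, fun x y => ?_⟩
  · rcases hZ01 x ω.1 with h | h <;> rcases hcoin01 ω.2 with h' | h' <;> simp [h, h']
  · rw [integral_prod_mul (Z x) coin, hm, hcoin]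
  · have hsq (ω : Ω × ℝ) :
        (Z x ω.1 * coin ω.2 - Z y ω.1 * coin ω.2) ^ 2 = (Z x ω.1 - Z y ω.1) ^ 2 * coin ω.2 := by
      rcases hcoin01 ω.2 with h | h <;> simp [h]
    simp_rw [hsq]
    rw [integral_prod_mul (fun ω => (Z x ω - Z y ω) ^ 2) coin, hcoin, hZg]
    ring

lemma integral_sq_indicator_one_sub_indicator_one {Ω : Type*} [MeasurableSpace Ω]
    (μ : Measure Ω) [IsFiniteMeasure μ] {A B : Set Ω} (hA : MeasurableSet A)
    (hB : MeasurableSet B) :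
    ∫ ω, (A.indicator 1 ω - B.indicator 1 ω : ℝ) ^ 2 ∂μ
      = μ.real A + μ.real B - 2 * μ.real (A ∩ B) := by
  have hpt (ω : Ω) : (A.indicator 1 ω - B.indicator 1 ω : ℝ) ^ 2
      = A.indicator 1 ω + B.indicator 1 ω - 2 * (A ∩ B).indicator 1 ω := by
    by_cases hωA : ω ∈ A <;> by_cases hωB : ω ∈ B <;> norm_num [hωA, hωB]
  have hint {S : Set Ω} (hS : MeasurableSet S) : Integrable (S.indicator (1 : Ω → ℝ)) μ :=
    (integrable_const 1).indicator hS
  simp_rw [hpt]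
  rw [integral_sub (f := fun ω => A.indicator 1 ω + B.indicator 1 ω) ((hint hA).add (hint hB))
      ((hint (hA.inter hB)).const_mul 2),
    integral_add (hint hA) (hint hB), integral_const_mul, integral_indicator_one hA,
    integral_indicator_one hB, integral_indicator_one (hA.inter hB)]

lemma cos_pos_iff_abs_lt_pi_div_two {x : ℝ} (hx : |x| < π + π / 2) :
    0 < cos x ↔ |x| < π / 2 := by
  refine ⟨fun h => ?_, fun h => cos_pos_of_mem_Ioo (abs_lt.1 h)⟩
  by_contra! h'
  rw [← cos_abs] at h
  exact h.not_ge (cos_nonpos_of_pi_div_two_le_of_le h' hx.le)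

-- The sector cut out by the half-planes with inner normals `(1, 0)` and `(cos θ, sin θ)`;
-- its opening angle is `π - θ` when `θ ∈ [0, π]`.
def wedge (θ : ℝ) : Set (ℝ × ℝ) := {p | 0 < p.1 ∧ 0 < cos θ * p.1 + sin θ * p.2}

lemma measurableSet_wedge (θ : ℝ) : MeasurableSet (wedge θ) := by
  unfold wedge
  measurability

lemma smul_mem_wedge_iff {θ r : ℝ} (hr : 0 < r) (p : ℝ × ℝ) : r • p ∈ wedge θ ↔ p ∈ wedge θ := by
  simp only [wedge, mem_ofPred_eq, Prod.smul_fst, Prod.smul_snd, smul_eq_mul, mul_left_comm _ r,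
    ← mul_add, mul_pos_iff_of_pos_left hr]

lemma volume_wedge_angles {θ : ℝ} (h0 : 0 ≤ θ) (hπ : θ ≤ π) :
    volume ({φ | (cos φ, sin φ) ∈ wedge θ} ∩ Ioo (-π) π) = ENNReal.ofReal (π - θ) := by
  have hpi := pi_pos
  have hset : {φ | (cos φ, sin φ) ∈ wedge θ} ∩ Ioo (-π) π = Ioo (θ - π / 2) (π / 2) := by
    ext φ
    simp only [wedge, mem_inter_iff, mem_ofPred_eq, mem_Ioo, ← cos_sub]
    constructor
    · rintro ⟨⟨h1, h2⟩, hl, hr⟩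
      rw [cos_pos_iff_abs_lt_pi_div_two (abs_lt.2 ⟨by linarith, by linarith⟩), abs_lt] at h1
      rw [cos_pos_iff_abs_lt_pi_div_two (abs_lt.2 ⟨by linarith, by linarith⟩), abs_lt] at h2
      constructor <;> linarith
    · rintro ⟨hl, hr⟩
      exact ⟨⟨cos_pos_of_mem_Ioo ⟨by linarith, hr⟩, cos_pos_of_mem_Ioo ⟨by linarith, by linarith⟩⟩,
        by linarith, by linarith⟩
  rw [hset, volume_Ioo]
  congr 1
  ring

lemma gaussianPDF_mul_gaussianPDF_polar (r φ : ℝ) :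
    gaussianPDF 0 1 (r * cos φ) * gaussianPDF 0 1 (r * sin φ)
      = gaussianPDF 0 1 r * gaussianPDF 0 1 0 := by
  rw [gaussianPDF, gaussianPDF, gaussianPDF, gaussianPDF,
    ← ENNReal.ofReal_mul (gaussianPDFReal_nonneg _ _ _),
    ← ENNReal.ofReal_mul (gaussianPDFReal_nonneg _ _ _)]
  congr 1
  simp only [gaussianPDFReal_def, NNReal.coe_one]
  rw [mul_mul_mul_comm, mul_mul_mul_comm _ (rexp _), ← exp_add, ← exp_add]
  congr 2
  linear_combination (-(r ^ 2) / 2) * sin_sq_add_cos_sq φ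

lemma gaussianReal_prod_apply_eq_lintegral_mul_volume {S : Set (ℝ × ℝ)} (hS : MeasurableSet S)
    (hcone : ∀ r : ℝ, 0 < r → ∀ p, r • p ∈ S ↔ p ∈ S) :
    (gaussianReal 0 1).prod (gaussianReal 0 1) S
      = (∫⁻ r in Ioi 0, ENNReal.ofReal r * (gaussianPDF 0 1 r * gaussianPDF 0 1 0))
        * volume ({φ | (cos φ, sin φ) ∈ S} ∩ Ioo (-π) π) := by
  have hΦ : MeasurableSet {φ | (cos φ, sin φ) ∈ S} :=
    (continuous_cos.prodMk continuous_sin).measurable hS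
  have hpolar : EqOn
      (fun q : ℝ × ℝ => ENNReal.ofReal q.1 •
        S.indicator (fun p => gaussianPDF 0 1 p.1 * gaussianPDF 0 1 p.2) (polarCoord.symm q))
      (fun q => ENNReal.ofReal q.1 * (gaussianPDF 0 1 q.1 * gaussianPDF 0 1 0)
        * {φ | (cos φ, sin φ) ∈ S}.indicator 1 q.2)
      (Ioi 0 ×ˢ Ioo (-π) π) := by
    rintro ⟨r, φ⟩ ⟨hr, -⟩
    have hmem : (r * cos φ, r * sin φ) ∈ S ↔ (cos φ, sin φ) ∈ S := by
      simpa using hcone r hr (cos φ, sin φ)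
    by_cases h : (cos φ, sin φ) ∈ S <;>
      simp [hmem, h, gaussianPDF_mul_gaussianPDF_polar]
  rw [gaussianReal_of_var_ne_zero 0 one_ne_zero,
    prod_withDensity (measurable_gaussianPDF 0 1) (measurable_gaussianPDF 0 1),
    ← Measure.volume_eq_prod, withDensity_apply _ hS, ← lintegral_indicator hS,
    ← lintegral_comp_polarCoord_symm, polarCoord_target,
    setLIntegral_congr_fun (measurableSet_Ioi.prod measurableSet_Ioo) hpolar,
    Measure.volume_eq_prod, ← Measure.prod_restrict,
    lintegral_prod_mul (f := fun r => ENNReal.ofReal r * (gaussianPDF 0 1 r * gaussianPDF 0 1 0))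
      (by fun_prop) ((measurable_one.indicator hΦ).aemeasurable),
    lintegral_indicator_one hΦ, Measure.restrict_apply hΦ]

lemma gaussianReal_prod_apply_of_smul_mem_iff {S : Set (ℝ × ℝ)} (hS : MeasurableSet S)
    (hcone : ∀ r : ℝ, 0 < r → ∀ p, r • p ∈ S ↔ p ∈ S) :
    (gaussianReal 0 1).prod (gaussianReal 0 1) S
      = volume ({φ | (cos φ, sin φ) ∈ S} ∩ Ioo (-π) π) / ENNReal.ofReal (2 * π) := by
  -- the radial factor is pinned down by the total mass
  have htotal := gaussianReal_prod_apply_eq_lintegral_mul_volume MeasurableSet.univ (by simp)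
  simp only [measure_univ, mem_univ, ofPred_true, univ_inter, volume_Ioo, sub_neg_eq_add, ← two_mul]
    at htotal
  rw [gaussianReal_prod_apply_eq_lintegral_mul_volume hS hcone,
    ENNReal.eq_inv_of_mul_eq_one_left htotal.symm, div_eq_mul_inv, mul_comm]

lemma measureReal_gaussianReal_prod_wedge {θ : ℝ} (h0 : 0 ≤ θ) (hπ : θ ≤ π) :
    ((gaussianReal 0 1).prod (gaussianReal 0 1)).real (wedge θ) = (π - θ) / (2 * π) := by
  rw [measureReal_def, gaussianReal_prod_apply_of_smul_mem_iff (measurableSet_wedge θ)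
      (fun _ hr => smul_mem_wedge_iff hr), volume_wedge_angles h0 hπ, ENNReal.toReal_div,
    ENNReal.toReal_ofReal (by linarith), ENNReal.toReal_ofReal (by positivity)]

lemma MeasureTheory.Measure.pi_map_prodMk_eval {ι : Type*} [Fintype ι] {α : ι → Type*}
    [∀ i, MeasurableSpace (α i)] (μ : (i : ι) → Measure (α i)) [∀ i, IsProbabilityMeasure (μ i)]
    {i j : ι} (hij : i ≠ j) :
    (Measure.pi μ).map (fun z => (z i, z j)) = (μ i).prod (μ j) := by
  have hindep : IndepFun (fun z : (i : ι) → α i => z i) (fun z => z j) (Measure.pi μ) :=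
    (iIndepFun_pi (X := fun _ => id) fun _ => aemeasurable_id).indepFun hij
  rw [(indepFun_iff_map_prod_eq_prod_map_map (measurable_pi_apply i).aemeasurable
    (measurable_pi_apply j).aemeasurable).1 hindep]
  exact congrArg₂ _ (measurePreserving_eval μ i).map_eq (measurePreserving_eval μ j).map_eq

section InnerProductSpace

variable {E : Type*} [NormedAddCommGroup E] [InnerProductSpace ℝ E] [FiniteDimensional ℝ E]

lemma exists_norm_eq_one_inner_eq_zero (hE : 2 ≤ finrank ℝ E) (x : E) :
    ∃ w : E, ‖w‖ = 1 ∧ ⟪x, w⟫ = 0 := by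
  have hspan : finrank ℝ (ℝ ∙ x) ≤ 1 := by simpa using finrank_span_le_card ({x} : Set E)
  have hperp : (ℝ ∙ x)ᗮ ≠ ⊥ := by
    intro hbot
    have := (ℝ ∙ x).finrank_add_finrank_orthogonal
    rw [hbot, finrank_bot] at this
    omega
  obtain ⟨v, hv, hv0⟩ := Submodule.exists_mem_ne_zero_of_ne_bot hperp
  refine ⟨‖v‖⁻¹ • v, norm_smul_inv_norm hv0, ?_⟩
  rw [inner_smul_right, Submodule.mem_orthogonal_singleton_iff_inner_right.1 hv, mul_zero]

lemma exists_eq_cos_arccos_smul_add_sin_arccos_smul (hE : 2 ≤ finrank ℝ E) {x y : E}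
    (hx : ‖x‖ = 1) (hy : ‖y‖ = 1) :
    ∃ w : E, ‖w‖ = 1 ∧ ⟪x, w⟫ = 0 ∧
      y = cos (arccos ⟪x, y⟫) • x + sin (arccos ⟪x, y⟫) • w := by
  set t := ⟪x, y⟫ with ht
  set v := y - t • x with hv
  have hxv : ⟪x, v⟫ = 0 := by
    rw [hv, inner_sub_right, real_inner_smul_right, real_inner_self_eq_norm_sq, hx]
    ring
  have hnorm : ‖v‖ = √(1 - t ^ 2) := by
    rw [← sqrt_sq (norm_nonneg v), hv, norm_sub_sq_real, real_inner_smul_right, norm_smul, hx, hy,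
      norm_eq_abs, mul_one, sq_abs, real_inner_comm, ← ht]
    ring_nf
  obtain ⟨w, hw, hxw, hvw⟩ : ∃ w : E, ‖w‖ = 1 ∧ ⟪x, w⟫ = 0 ∧ ‖v‖ • w = v := by
    by_cases hv0 : v = 0
    · obtain ⟨w, hw, hxw⟩ := exists_norm_eq_one_inner_eq_zero hE x
      exact ⟨w, hw, hxw, by simp [hv0]⟩
    · refine ⟨‖v‖⁻¹ • v, norm_smul_inv_norm hv0, ?_, smul_inv_smul₀ (norm_ne_zero_iff.2 hv0) v⟩
      rw [inner_smul_right, hxv, mul_zero]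
  have habs : |t| ≤ 1 := by simpa [hx, hy] using abs_real_inner_le_norm x y
  refine ⟨w, hw, hxw, ?_⟩
  rw [cos_arccos (abs_le.1 habs).1 (abs_le.1 habs).2, sin_arccos, ← hnorm, hvw, hv,
    add_sub_cancel]

variable [MeasurableSpace E] [BorelSpace E]

lemma map_inner_prodMk_stdGaussian {x w : E} (hx : ‖x‖ = 1) (hw : ‖w‖ = 1) (hxw : ⟪x, w⟫ = 0) :
    (stdGaussian E).map (fun u => (⟪x, u⟫, ⟪w, u⟫))
      = (gaussianReal 0 1).prod (gaussianReal 0 1) := by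
  classical
  have hne : x ≠ w := by
    rintro rfl
    simp [hx] at hxw
  have hwx : ⟪w, x⟫ = 0 := by rwa [real_inner_comm]
  have horth : Orthonormal ℝ ((↑) : ({x, w} : Set E) → E) := by
    rw [orthonormal_subtype_iff_ite]
    simp only [mem_insert_iff, mem_singleton_iff]
    rintro a (rfl | rfl) b (rfl | rfl) <;>
      simp [hx, hw, hxw, hwx, hne, hne.symm]
  obtain ⟨s, b, hs, hb⟩ := horth.exists_orthonormalBasis_extension
  let i : s := ⟨x, hs (by simp)⟩
  let j : s := ⟨w, hs (by simp)⟩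
  have hcoord : (fun u => (⟪x, u⟫, ⟪w, u⟫)) ∘ (fun z : s → ℝ => ∑ k, z k • b k)
      = fun z => (z i, z j) := by
    ext z <;> simp only [Function.comp_apply]
    · rw [show x = b i by simp [hb, i], b.orthonormal.inner_right_fintype]
    · rw [show w = b j by simp [hb, j], b.orthonormal.inner_right_fintype]
  rw [stdGaussian_eq_map_pi_orthonormalBasis b, Measure.map_map (by fun_prop) (by fun_prop), hcoord,
    Measure.pi_map_prodMk_eval _ (fun h => hne (congrArg Subtype.val h))]

lemma measureReal_stdGaussian_inner_pos_inter_inner_pos (hE : 2 ≤ finrank ℝ E) {x y : E}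
    (hx : ‖x‖ = 1) (hy : ‖y‖ = 1) :
    (stdGaussian E).real ({u | 0 < ⟪x, u⟫} ∩ {u | 0 < ⟪y, u⟫})
      = (π - arccos ⟪x, y⟫) / (2 * π) := by
  obtain ⟨w, hw, hxw, hyw⟩ := exists_eq_cos_arccos_smul_add_sin_arccos_smul hE hx hy
  have hθ0 := arccos_nonneg ⟪x, y⟫
  have hθπ := arccos_le_pi ⟪x, y⟫
  generalize arccos ⟪x, y⟫ = θ at hyw hθ0 hθπ ⊢
  have hpre : {u | 0 < ⟪x, u⟫} ∩ {u | 0 < ⟪y, u⟫}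
      = (fun u => (⟪x, u⟫, ⟪w, u⟫)) ⁻¹' wedge θ := by
    have hyu (u : E) : ⟪y, u⟫ = cos θ * ⟪x, u⟫ + sin θ * ⟪w, u⟫ := by
      rw [hyw, inner_add_left, real_inner_smul_left, real_inner_smul_left]
    ext u
    simp only [wedge, mem_inter_iff, mem_ofPred_eq, mem_preimage]
    rw [hyu]
  rw [hpre, ← map_measureReal_apply (by fun_prop) (measurableSet_wedge θ),
    map_inner_prodMk_stdGaussian hx hw hxw,
    measureReal_gaussianReal_prod_wedge hθ0 hθπ]

end InnerProductSpace

theorem isIndicatorVariogram_arccos_inner_div_two_pi (E : Type) [NormedAddCommGroup E]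
    [InnerProductSpace ℝ E] [FiniteDimensional ℝ E] [MeasurableSpace E] [BorelSpace E]
    (hE : 2 ≤ finrank ℝ E) :
    IsIndicatorVariogram {x : E // ‖x‖ = 1} (fun q => arccos ⟪(q.1 : E), q.2⟫ / (2 * π)) := by
  set H : E → Set E := fun x => {u | 0 < ⟪x, u⟫}
  have hH (x : E) : MeasurableSet (H x) := measurableSet_lt measurable_const (by fun_prop)
  have hhalf (x : {x : E // ‖x‖ = 1}) : (stdGaussian E).real (H x) = 1 / 2 := by
    have h := measureReal_stdGaussian_inner_pos_inter_inner_pos hE x.2 x.2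
    rw [inter_self, real_inner_self_eq_norm_sq, x.2, one_pow, arccos_one, sub_zero] at h
    rw [h]
    field_simp
  refine ⟨E, inferInstance, stdGaussian E, inferInstance, fun x => (H x).indicator 1,
    fun x => measurable_one.indicator (hH x), fun x u => ?_, ⟨1 / 2, fun x => ?_⟩, fun x y => ?_⟩
  · by_cases hu : u ∈ H x <;> simp [hu]
  · rw [integral_indicator_one (hH x), hhalf]
  · rw [integral_sq_indicator_one_sub_indicator_one _ (hH x) (hH y), hhalf, hhalf,
      measureReal_stdGaussian_inner_pos_inter_inner_pos hE x.2 y.2]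
    field_simp
    ring

/-- On the unit `N`-sphere (`N ≥ 1`) with great-circle distance
`d(x,y) = arccos⟪x,y⟫`, the function `g(x,y) = ϖ·d(x,y)/(2π)` is an indicator
variogram for every `ϖ ∈ [0,1]`. -/
theorem linear_variogram_on_sphere_isIndicatorVariogram
    (N : ℕ) (hN : 1 ≤ N) (ϖ : ℝ) (hϖ : ϖ ∈ Set.Icc (0 : ℝ) 1) :
    IsIndicatorVariogram {x : EuclideanSpace ℝ (Fin (N + 1)) // ‖x‖ = 1}
      (fun q => ϖ * Real.arccos ⟪(q.1 : EuclideanSpace ℝ (Fin (N + 1))),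
        (q.2 : EuclideanSpace ℝ (Fin (N + 1)))⟫ / (2 * π)) := by
  have hE : 2 ≤ finrank ℝ (EuclideanSpace ℝ (Fin (N + 1))) := by simpa using hN
  simpa only [mul_div_assoc] using (isIndicatorVariogram_arccos_inner_div_two_pi _ hE).const_mul hϖ
end
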